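/- Let X ~ Bernoulli(1/2), Y = ∅ (no side information), and let D_1, D_2 ≥ 0. Define R(α) = max{ α(1 - H_2(D_1/α))·1[D_1/α ≤ 1/2], (1-α)(1 - H_2(D_2/(1-α)))·1[D_2/(1-α) ≤ 1/2] } for α ∈ (0,1). Then for any random variables A ∈ {1,2}, U_1, U_2 and reconstruction X̂_1 with P(A=2) = α, satisfying α·E[d_H(X,X̂_1)|A=2] ≤ D_1 where X̂_1 is a function of U_1 and d_H is Hamming distortion, one has I(X;A) + α·I(X;U_1|A=2) ≥ α(1 - H_2(D_1/α)) whenever D_1/α ≤ 1/2. -/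

import Mathlib

open Finset

section Defs

/-- Probability of the event `X = x` under the mass function `μ`. -/
noncomputable def pr {Ω : Type*} [Fintype Ω] (μ : Ω → ℝ) {α : Type*} [Fintype α]
    [DecidableEq α] (X : Ω → α) (x : α) : ℝ :=
  ∑ ω, if X ω = x then μ ω else 0

/-- Shannon entropy (base 2) of a finitely valued random variable. -/
noncomputable def ent {Ω : Type*} [Fintype Ω] (μ : Ω → ℝ) {α : Type*} [Fintype α]
    [DecidableEq α] (X : Ω → α) : ℝ :=
  - ∑ x, pr μ X x * Real.logb 2 (pr μ X x)

/-- Conditional entropy `H(X|Y) = H(X,Y) - H(Y)`. -/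
noncomputable def condEnt {Ω : Type*} [Fintype Ω] (μ : Ω → ℝ) {α β : Type*}
    [Fintype α] [DecidableEq α] [Fintype β] [DecidableEq β]
    (X : Ω → α) (Y : Ω → β) : ℝ :=
  ent μ (fun ω => (X ω, Y ω)) - ent μ Y

/-- Mutual information `I(X;Y) = H(X) - H(X|Y)`. -/
noncomputable def mi {Ω : Type*} [Fintype Ω] (μ : Ω → ℝ) {α β : Type*}
    [Fintype α] [DecidableEq α] [Fintype β] [DecidableEq β]
    (X : Ω → α) (Y : Ω → β) : ℝ :=
  ent μ X - condEnt μ X Y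

/-- Conditional mutual information `I(X;Y|Z) = H(X|Z) - H(X|Y,Z)`. -/
noncomputable def cmi {Ω : Type*} [Fintype Ω] (μ : Ω → ℝ) {α β γ : Type*}
    [Fintype α] [DecidableEq α] [Fintype β] [DecidableEq β] [Fintype γ] [DecidableEq γ]
    (X : Ω → α) (Y : Ω → β) (Z : Ω → γ) : ℝ :=
  condEnt μ X Z - condEnt μ X (fun ω => (Y ω, Z ω))

/-- `μ` is a probability mass function on the finite sample space `Ω`. -/
def IsProb {Ω : Type*} [Fintype Ω] (μ : Ω → ℝ) : Prop :=
  (∀ ω, 0 ≤ μ ω) ∧ ∑ ω, μ ω = 1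

/-- `A` and `Y` are conditionally independent given `X` (Markov chain `A - X - Y`). -/
def CondIndep {Ω : Type*} [Fintype Ω] (μ : Ω → ℝ) {α β γ : Type*}
    [Fintype α] [DecidableEq α] [Fintype β] [DecidableEq β] [Fintype γ] [DecidableEq γ]
    (A : Ω → α) (Y : Ω → β) (X : Ω → γ) : Prop :=
  ∀ a y x, pr μ (fun ω => (A ω, Y ω, X ω)) (a, y, x) * pr μ X x =
    pr μ (fun ω => (A ω, X ω)) (a, x) * pr μ (fun ω => (Y ω, X ω)) (y, x)

/-- Binary entropy function (base 2). -/
noncomputable def H2 (p : ℝ) : ℝ :=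
  -(p * Real.logb 2 p) - (1 - p) * Real.logb 2 (1 - p)

end Defs

/-! Since `H(X) = 1` and `H(X | A = 1) ≤ 1`, the chain rule over `A` gives
`I(X;A) ≥ α (1 - H(X | A = 2))`; adding `α I(X;U₁ | A = 2)` leaves `α (1 - H(X | U₁, A = 2))`.
Under the law given `A = 2`, binary Fano bounds `H(X | U₁)` by `H₂` of the probability of
`X ≠ g U₁`, which is at most `D₁ / α ≤ 1/2`, where `H₂` is increasing. -/

lemma mul_logb_div_of_imp {b x y : ℝ} (hxy : y = 0 → x = 0) :
    x * Real.logb b (x / y) = x * Real.logb b x - x * Real.logb b y := by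
  rcases eq_or_ne x 0 with rfl | hx
  · simp
  · rw [Real.logb_div hx fun hy => hx (hxy hy), mul_sub]

lemma mul_neg_sum_div_mul_logb_div {ι : Type*} [Fintype ι] {P : ι → ℝ} {p : ℝ}
    (hsum : ∑ i, P i = p) (hzero : p = 0 → ∀ i, P i = 0) :
    p * -∑ i, P i / p * Real.logb 2 (P i / p) =
      -∑ i, P i * Real.logb 2 (P i) + p * Real.logb 2 p := by
  have hterm : ∀ i, p * (P i / p * Real.logb 2 (P i / p)) =
      P i * Real.logb 2 (P i) - P i * Real.logb 2 p := fun i => by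
    rw [← mul_assoc, mul_div_cancel_of_imp' fun h => hzero h i,
      mul_logb_div_of_imp fun h => hzero h i]
  rw [mul_neg, Finset.mul_sum, Finset.sum_congr rfl fun i _ => hterm i, Finset.sum_sub_distrib,
    ← Finset.sum_mul, hsum]
  ring

section

variable {Ω : Type*} [Fintype Ω] {μ : Ω → ℝ}
  {α β : Type*} [Fintype α] [DecidableEq α] [Fintype β] [DecidableEq β]

/-- The law `μ( · | A = a)`; the zero function when `P(A = a) = 0`. -/
noncomputable def condPMF (μ : Ω → ℝ) (A : Ω → α) (a : α) : Ω → ℝ :=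
  fun ω => if A ω = a then μ ω / pr μ A a else 0

lemma pr_nonneg (hμ : ∀ ω, 0 ≤ μ ω) (X : Ω → α) (x : α) : 0 ≤ pr μ X x :=
  Finset.sum_nonneg fun ω _ => by split <;> simp [hμ ω]

lemma sum_pr (μ : Ω → ℝ) (X : Ω → α) : ∑ x, pr μ X x = ∑ ω, μ ω := by
  unfold pr
  rw [Finset.sum_comm]
  simp

lemma sum_pr_pair_eq_pr_snd (μ : Ω → ℝ) (X : Ω → α) (Y : Ω → β) (y : β) :
    ∑ x, pr μ (fun ω => (X ω, Y ω)) (x, y) = pr μ Y y := by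
  unfold pr
  rw [Finset.sum_comm]
  refine Finset.sum_congr rfl fun ω _ => ?_
  simp only [Prod.mk.injEq, ite_and]
  split <;> simp

lemma sum_pr_pair_eq_pr_fst (μ : Ω → ℝ) (X : Ω → α) (Y : Ω → β) (x : α) :
    ∑ y, pr μ (fun ω => (X ω, Y ω)) (x, y) = pr μ X x := by
  unfold pr
  rw [Finset.sum_comm]
  refine Finset.sum_congr rfl fun ω _ => ?_
  simp only [Prod.mk.injEq, ite_and]
  split <;> simp

lemma pr_pair_le_pr_snd (hμ : ∀ ω, 0 ≤ μ ω) (X : Ω → α) (Y : Ω → β) (x : α) (y : β) :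
    pr μ (fun ω => (X ω, Y ω)) (x, y) ≤ pr μ Y y :=
  sum_pr_pair_eq_pr_snd μ X Y y ▸
    Finset.single_le_sum (fun x _ => pr_nonneg hμ _ (x, y)) (Finset.mem_univ x)

lemma pr_condPMF (μ : Ω → ℝ) (Z : Ω → β) (A : Ω → α) (z : β) (a : α) :
    pr (condPMF μ A a) Z z = pr μ (fun ω => (Z ω, A ω)) (z, a) / pr μ A a := by
  unfold condPMF pr
  rw [Finset.sum_div]
  refine Finset.sum_congr rfl fun ω _ => ?_
  by_cases hZ : Z ω = z <;> by_cases hA : A ω = a <;> simp [hZ, hA]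

lemma isProb_condPMF (hμ : ∀ ω, 0 ≤ μ ω) (A : Ω → α) {a : α} (ha : pr μ A a ≠ 0) :
    IsProb (condPMF μ A a) := by
  refine ⟨fun ω => ?_, ?_⟩
  · unfold condPMF
    split
    · exact div_nonneg (hμ ω) (pr_nonneg hμ A a)
    · exact le_rfl
  · calc ∑ ω, condPMF μ A a ω = (∑ ω, if A ω = a then μ ω else 0) / pr μ A a := by
          rw [Finset.sum_div]
          simp only [condPMF, ite_div, zero_div]
      _ = 1 := div_self ha

lemma pr_mul_ent_condPMF (hμ : ∀ ω, 0 ≤ μ ω) (X : Ω → β) (A : Ω → α) (a : α) :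
    pr μ A a * ent (condPMF μ A a) X =
      -∑ x, pr μ (fun ω => (X ω, A ω)) (x, a) * Real.logb 2 (pr μ (fun ω => (X ω, A ω)) (x, a))
        + pr μ A a * Real.logb 2 (pr μ A a) := by
  have hmarg := sum_pr_pair_eq_pr_snd μ X A a
  simp only [ent, pr_condPMF]
  refine mul_neg_sum_div_mul_logb_div hmarg fun ha x => ?_
  exact (Finset.sum_eq_zero_iff_of_nonneg fun x _ => pr_nonneg hμ _ _).1 (hmarg.trans ha) x
    (Finset.mem_univ x)

lemma condEnt_eq_sum_pr_mul_ent_condPMF (hμ : ∀ ω, 0 ≤ μ ω) (X : Ω → β) (A : Ω → α) :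
    condEnt μ X A = ∑ a, pr μ A a * ent (condPMF μ A a) X := by
  rw [Finset.sum_congr rfl fun a _ => pr_mul_ent_condPMF hμ X A a, Finset.sum_add_distrib,
    Finset.sum_neg_distrib, condEnt]
  simp only [ent]
  rw [Fintype.sum_prod_type_right]
  ring

lemma ent_comp_equiv (μ : Ω → ℝ) (X : Ω → α) (e : α ≃ β) :
    ent μ (fun ω => e (X ω)) = ent μ X := by
  have hpr : ∀ x, pr μ (fun ω => e (X ω)) (e x) = pr μ X x := fun x => by
    simp only [pr, e.apply_eq_iff_eq]
  unfold ent
  rw [← e.sum_comp]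
  simp only [hpr]

lemma pr_mul_pr_condPMF (hμ : ∀ ω, 0 ≤ μ ω) (Z : Ω → β) (A : Ω → α) (z : β) (a : α) :
    pr μ A a * pr (condPMF μ A a) Z z = pr μ (fun ω => (Z ω, A ω)) (z, a) := by
  rw [pr_condPMF]
  refine mul_div_cancel_of_imp' fun ha => le_antisymm ?_ (pr_nonneg hμ _ _)
  exact ha ▸ pr_pair_le_pr_snd hμ Z A z a

lemma pr_condPMF_mem_Icc (hμ : ∀ ω, 0 ≤ μ ω) (Z : Ω → β) (A : Ω → α) (z : β) (a : α) :
    pr (condPMF μ A a) Z z ∈ Set.Icc 0 1 := by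
  rw [pr_condPMF]
  exact ⟨div_nonneg (pr_nonneg hμ _ _) (pr_nonneg hμ _ _),
    div_le_one_of_le₀ (pr_pair_le_pr_snd hμ Z A z a) (pr_nonneg hμ _ _)⟩

lemma H2_eq_binEntropy (p : ℝ) : H2 p = Real.binEntropy p / Real.log 2 := by
  rw [H2, Real.binEntropy, Real.log_inv, Real.log_inv, Real.logb, Real.logb]
  ring

lemma H2_le_one (p : ℝ) : H2 p ≤ 1 := by
  rw [H2_eq_binEntropy, div_le_one (Real.log_pos one_lt_two)]
  exact Real.binEntropy_le_log_two

lemma H2_two_inv : H2 2⁻¹ = 1 := by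
  rw [H2_eq_binEntropy, Real.binEntropy_two_inv, div_self (Real.log_pos one_lt_two).ne']

lemma monotoneOn_H2 : MonotoneOn H2 (Set.Icc 0 2⁻¹) := fun p hp q hq hpq => by
  rw [H2_eq_binEntropy, H2_eq_binEntropy]
  gcongr
  exact Real.binEntropy_strictMonoOn.monotoneOn hp hq hpq

lemma concaveOn_H2 : ConcaveOn ℝ (Set.Icc 0 1) H2 := by
  have hH2 : H2 = fun p => (Real.log 2)⁻¹ • Real.binEntropy p := by
    ext p
    rw [H2_eq_binEntropy, smul_eq_mul, div_eq_inv_mul]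
  rw [hH2]
  exact Real.strictConcave_binEntropy.concaveOn.smul (inv_nonneg.2 (Real.log_pos one_lt_two).le)

lemma ent_eq_H2 (hμ : ∑ ω, μ ω = 1) (Z : Ω → Bool) : ent μ Z = H2 (pr μ Z true) := by
  have hfalse : pr μ Z false = 1 - pr μ Z true := by
    have := sum_pr μ Z
    rw [Fintype.sum_bool, hμ] at this
    linarith
  rw [ent, H2, Fintype.sum_bool, hfalse]
  ring

lemma pr_mul_ent_condPMF_eq_H2 (hμ : ∀ ω, 0 ≤ μ ω) (Z : Ω → Bool) (A : Ω → α) (a : α) :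
    pr μ A a * ent (condPMF μ A a) Z = pr μ A a * H2 (pr (condPMF μ A a) Z true) := by
  rcases eq_or_ne (pr μ A a) 0 with ha | ha
  · simp [ha]
  · rw [ent_eq_H2 (isProb_condPMF hμ A ha).2]

/-- Chain rule, then Jensen's inequality for the concave `H2`. -/
lemma condEnt_le_H2 (hμ : IsProb μ) (Z : Ω → Bool) (A : Ω → α) :
    condEnt μ Z A ≤ H2 (pr μ Z true) := by
  have hmean : ∑ a, pr μ A a • pr (condPMF μ A a) Z true = pr μ Z true := by
    simp only [smul_eq_mul, pr_mul_pr_condPMF hμ.1, sum_pr_pair_eq_pr_fst]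
  rw [condEnt_eq_sum_pr_mul_ent_condPMF hμ.1, ← hmean]
  simp only [pr_mul_ent_condPMF_eq_H2 hμ.1, ← smul_eq_mul]
  exact concaveOn_H2.le_map_sum (fun a _ => pr_nonneg hμ.1 A a) (by rw [sum_pr, hμ.2])
    fun a _ => pr_condPMF_mem_Icc hμ.1 Z A true a

/-- Binary Fano inequality. -/
lemma condEnt_le_H2_xor (hμ : IsProb μ) (X : Ω → Bool) (U : Ω → β) (g : β → Bool) :
    condEnt μ X U ≤ H2 (pr μ (fun ω => xor (X ω) (g (U ω))) true) := by
  let e : Bool × β ≃ Bool × β :=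
    Function.Involutive.toPerm (fun z => (xor z.1 (g z.2), z.2)) fun z => by simp
  have hflip : condEnt μ X U = condEnt μ (fun ω => xor (X ω) (g (U ω))) U := by
    rw [condEnt, condEnt, ← ent_comp_equiv μ _ e]
    rfl
  rw [hflip]
  exact condEnt_le_H2 hμ _ U

end

theorem stmt7_general {Ω 𝒰 : Type*} [Fintype Ω] [Fintype 𝒰] [DecidableEq 𝒰]
    (μ : Ω → ℝ) (hμ : IsProb μ)
    (X : Ω → Bool) (hX : pr μ X true = 1 / 2)
    (A : Ω → Fin 2) (U1 : Ω → 𝒰) (g : 𝒰 → Bool)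
    (D1 α : ℝ) (hα : α = pr μ A 1) (hαpos : 0 < α)
    (hdist : ∑ ω, (if A ω = 1 then μ ω else 0) *
        (if X ω = g (U1 ω) then 0 else 1) ≤ D1)
    (hhalf : D1 / α ≤ 1 / 2) :
    α * (1 - H2 (D1 / α)) ≤
      mi μ X A + α * mi (fun ω => if A ω = 1 then μ ω / α else 0) X U1 := by
  subst hα
  show _ ≤ mi μ X A + pr μ A 1 * mi (condPMF μ A 1) X U1
  set ν := condPMF μ A 1
  have hν : IsProb ν := isProb_condPMF hμ.1 A hαpos.ne'
  have hentX : ent μ X = 1 := by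
    rw [ent_eq_H2 hμ.2, hX, one_div, H2_two_inv]
  have hA0 : pr μ A 0 = 1 - pr μ A 1 := by
    have := sum_pr μ A
    rw [Fin.sum_univ_two, hμ.2] at this
    linarith
  have hcondA : condEnt μ X A ≤ pr μ A 0 + pr μ A 1 * ent ν X := by
    rw [condEnt_eq_sum_pr_mul_ent_condPMF hμ.1, Fin.sum_univ_two, pr_mul_ent_condPMF_eq_H2 hμ.1]
    gcongr
    exact mul_le_of_le_one_right (pr_nonneg hμ.1 A 0) (H2_le_one _)
  have herr : pr μ A 1 * pr ν (fun ω => xor (X ω) (g (U1 ω))) true ≤ D1 := by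
    refine (pr_mul_pr_condPMF hμ.1 _ A true 1).trans_le (le_of_eq_of_le ?_ hdist)
    refine Finset.sum_congr rfl fun ω _ => ?_
    by_cases hA : A ω = 1 <;> by_cases hXg : X ω = g (U1 ω) <;> simp [hA, hXg]
  replace herr := (le_div_iff₀' hαpos).2 herr
  have hfano : condEnt ν X U1 ≤ H2 (D1 / pr μ A 1) :=
    (condEnt_le_H2_xor hν X U1 g).trans <| monotoneOn_H2 ⟨pr_nonneg hν.1 _ _, by linarith⟩
      ⟨(pr_nonneg hν.1 _ _).trans herr, by linarith⟩ herr
  have := mul_le_mul_of_nonneg_left hfano hαpos.le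
  simp only [mi, hentX]
  linarith

/-- Converse bound of Example 2. `X ~ Bern(1/2)`, `A : Ω → Fin 2`
with the value `1` representing the action "2", `α = P(A = 2) > 0`,
`X̂₁ = g ∘ U₁`, and `α E[d_H(X,X̂₁) | A=2] ≤ D₁` with `D₁/α ≤ 1/2`. Then
`I(X;A) + α I(X;U₁|A=2) ≥ α (1 - H₂(D₁/α))`, where `I(X;U₁|A=2)` is computed
under the conditional law given `A = 2`. -/
theorem stmt7 {Ω 𝒰 : Type*} [Fintype Ω] [Fintype 𝒰] [DecidableEq 𝒰]
    (μ : Ω → ℝ) (hμ : IsProb μ)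
    (X : Ω → Bool) (hX : pr μ X true = 1 / 2)
    (A : Ω → Fin 2) (U1 : Ω → 𝒰) (g : 𝒰 → Bool)
    (D1 α : ℝ) (hα : α = pr μ A 1) (hαpos : 0 < α) (hD1 : 0 ≤ D1)
    (hdist : ∑ ω, (if A ω = 1 then μ ω else 0) *
        (if X ω = g (U1 ω) then 0 else 1) ≤ D1)
    (hhalf : D1 / α ≤ 1 / 2) :
    α * (1 - H2 (D1 / α)) ≤
      mi μ X A + α * mi (fun ω => if A ω = 1 then μ ω / α else 0) X U1 :=
  stmt7_general μ hμ X hX A U1 g D1 α hα hαpos hdist hhalf
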